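/- arXiv:math/0512600 — 2 statements merged into one kernel-verified Lean document; each statement's English description precedes it below -/
import Mathlib

section
/- Let K be a compact metric space, Y a normed space, and let d_1, …, d_q : K → ℝ be continuous nonnegative functions with ∑_i d_i(û) = 1 for all û. Fix vectors ζ¹, …, ζ^q ∈ Y. For û ∈ K define the 1-periodic step function ζ(·, û) : ℝ → Y by ζ(s, û) = ζ^i when d_1(û)+⋯+d_{i−1}(û) ≤ s mod 1 < d_1(û)+⋯+d_i(û). Then for û₁, û₂ ∈ K, ∫₀¹ ‖ζ(s, û₁) − ζ(s, û₂)‖⁴ ds ≤ C ∑_{i=1}^q |d_i(û₁) − d_i(û₂)|, where C depends only on q and max_i ‖ζ^i‖. -/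
/-!
At a point `s ∈ [0,1)` the two step functions can differ only if `s` separates the breakpoints
`D_k(û₁)` and `D_k(û₂)` for some `k`, where `D_k = d_1 + ⋯ + d_k`: otherwise `s` falls into the
same cell for both. The intervals between these breakpoints have total length
`∑_k |D_k(û₁) - D_k(û₂)| ≤ (q + 1) ∑_i |d_i(û₁) - d_i(û₂)|`, and on them the integrand is at most
`(2 ∑_i ‖ζ^i‖)⁴`.
-/

open MeasureTheory Finset Set

theorem exists_mem_Ico_succ_of_mem_Ico {α : Type*} [LinearOrder α] (a : ℕ → α) {s : α} :
    ∀ {n : ℕ}, s ∈ Ico (a 0) (a n) → ∃ i < n, s ∈ Ico (a i) (a (i + 1))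
  | 0, hs => absurd hs.2 hs.1.not_gt
  | n + 1, hs => by
    by_cases han : a n ≤ s
    · exact ⟨n, n.lt_succ_self, han, hs.2⟩
    · obtain ⟨i, hi, hsi⟩ := exists_mem_Ico_succ_of_mem_Ico a ⟨hs.1, lt_of_not_ge han⟩
      exact ⟨i, hi.trans n.lt_succ_self, hsi⟩

theorem le_iff_le_of_notMem_Ico_min_max {α : Type*} [LinearOrder α] {a b s : α}
    (h : s ∉ Ico (min a b) (max a b)) : a ≤ s ↔ b ≤ s := by
  grind

theorem abs_sum_sub_sum_le_sum_abs_sub {ι α : Type*} [AddCommGroup α] [LinearOrder α]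
    [IsOrderedAddMonoid α] {s t : Finset ι} (hst : s ⊆ t) (f g : ι → α) :
    |∑ i ∈ s, f i - ∑ i ∈ s, g i| ≤ ∑ i ∈ t, |f i - g i| := calc
  |∑ i ∈ s, f i - ∑ i ∈ s, g i| = |∑ i ∈ s, (f i - g i)| := by rw [sum_sub_distrib]
  _ ≤ ∑ i ∈ s, |f i - g i| := abs_sum_le_sum_abs _ _
  _ ≤ ∑ i ∈ t, |f i - g i| := sum_le_sum_of_subset_of_nonneg hst fun _ _ _ => abs_nonneg _

theorem volume_real_biUnion_Ico_min_max_le {ι : Type*} (s : Finset ι) (a b : ι → ℝ) :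
    volume.real (⋃ i ∈ s, Ico (min (a i) (b i)) (max (a i) (b i))) ≤ ∑ i ∈ s, |a i - b i| :=
  (measureReal_biUnion_finset_le _ _).trans_eq <| sum_congr rfl fun _ _ => by
    rw [Real.volume_real_Ico_of_le min_le_max, max_sub_min_eq_abs, abs_sub_comm]

theorem intervalIntegral_le_mul_measureReal {f : ℝ → ℝ} {T : Set ℝ} {a b c : ℝ} (hab : a ≤ b)
    (hc : 0 ≤ c) (hT : MeasurableSet T) (hT_fin : volume T ≠ ⊤)
    (hf : ∀ s ∈ Ioo a b, f s ≤ T.indicator (fun _ => c) s) :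
    ∫ s in a..b, f s ≤ c * volume.real T := by
  have hg : Integrable (T.indicator fun _ => c) :=
    (integrable_indicator_iff hT).2 (integrableOn_const hT_fin)
  by_cases hfi : IntervalIntegrable f volume a b
  · rw [intervalIntegral.integral_of_le hab, integral_Ioc_eq_integral_Ioo]
    calc ∫ s in Ioo a b, f s ≤ ∫ s in Ioo a b, T.indicator (fun _ => c) s :=
          setIntegral_mono_on (hfi.1.mono_set Ioo_subset_Ioc_self) hg.integrableOn
            measurableSet_Ioo hf
      _ ≤ ∫ s, T.indicator (fun _ => c) s :=
          setIntegral_le_integral hg (ae_of_all _ (indicator_nonneg fun _ _ => hc))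
      _ = c * volume.real T := by rw [integral_indicator_const c hT, smul_eq_mul, mul_comm]
  · rw [intervalIntegral.integral_undef hfi]
    positivity

section StepFunction

variable {Y : Type*} {q : ℕ} {ζ : ℕ → Y} {a b : ℕ → ℝ} {f g : ℝ → Y}

theorem norm_step_sub_step_le [SeminormedAddCommGroup Y]
    (hf : ∀ i < q, ∀ s ∈ Ico (a i) (a (i + 1)), f s = ζ i)
    (hg : ∀ i < q, ∀ s ∈ Ico (b i) (b (i + 1)), g s = ζ i) {s : ℝ}
    (hsa : s ∈ Ico (a 0) (a q)) (hsb : s ∈ Ico (b 0) (b q)) :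
    ‖f s - g s‖ ≤ 2 * ∑ i ∈ range q, ‖ζ i‖ := by
  obtain ⟨i, hi, hsi⟩ := exists_mem_Ico_succ_of_mem_Ico a hsa
  obtain ⟨j, hj, hsj⟩ := exists_mem_Ico_succ_of_mem_Ico b hsb
  have hle : ∀ k < q, ‖ζ k‖ ≤ ∑ i ∈ range q, ‖ζ i‖ := fun k hk =>
    single_le_sum (fun _ _ => norm_nonneg _) (mem_range.2 hk)
  rw [hf i hi s hsi, hg j hj s hsj]
  linarith [norm_sub_le (ζ i) (ζ j), hle i hi, hle j hj]

theorem step_eq_step_of_forall_le_iff_le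
    (hf : ∀ i < q, ∀ s ∈ Ico (a i) (a (i + 1)), f s = ζ i)
    (hg : ∀ i < q, ∀ s ∈ Ico (b i) (b (i + 1)), g s = ζ i) {s : ℝ}
    (hs : s ∈ Ico (a 0) (a q)) (hab : ∀ k ≤ q, (a k ≤ s ↔ b k ≤ s)) : f s = g s := by
  obtain ⟨i, hi, hsi⟩ := exists_mem_Ico_succ_of_mem_Ico a hs
  have hsi' : s ∈ Ico (b i) (b (i + 1)) :=
    ⟨(hab i hi.le).1 hsi.1, lt_of_not_ge fun h => hsi.2.not_ge ((hab (i + 1) hi).2 h)⟩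
  rw [hf i hi s hsi, hg i hi s hsi']

theorem norm_step_sub_step_pow_le_indicator [SeminormedAddCommGroup Y] {n : ℕ} (hn : n ≠ 0)
    (hf : ∀ i < q, ∀ s ∈ Ico (a i) (a (i + 1)), f s = ζ i)
    (hg : ∀ i < q, ∀ s ∈ Ico (b i) (b (i + 1)), g s = ζ i) {s : ℝ}
    (hsa : s ∈ Ico (a 0) (a q)) (hsb : s ∈ Ico (b 0) (b q)) :
    ‖f s - g s‖ ^ n ≤ (⋃ k ∈ range (q + 1), Ico (min (a k) (b k)) (max (a k) (b k))).indicator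
      (fun _ => (2 * ∑ i ∈ range q, ‖ζ i‖) ^ n) s := by
  by_cases hsT : s ∈ ⋃ k ∈ range (q + 1), Ico (min (a k) (b k)) (max (a k) (b k))
  · rw [indicator_of_mem hsT]
    exact pow_le_pow_left₀ (norm_nonneg _) (norm_step_sub_step_le hf hg hsa hsb) n
  · have hsep (k) (hk : k ≤ q) : a k ≤ s ↔ b k ≤ s :=
      le_iff_le_of_notMem_Ico_min_max fun h => hsT (mem_iUnion₂.2 ⟨k, mem_range.2 (by omega), h⟩)
    rw [step_eq_step_of_forall_le_iff_le hf hg hsa hsep, sub_self, norm_zero, zero_pow hn,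
      indicator_of_notMem hsT]

end StepFunction

theorem stmt_5_general {K Y : Type*}
    [NormedAddCommGroup Y]
    (q : ℕ) (d : ℕ → K → ℝ)
    (hd_sum : ∀ u : K, ∑ i ∈ Finset.range q, d i u = 1)
    (ζ : ℕ → Y) (z : K → ℝ → Y)
    (hz : ∀ u : K, ∀ i < q, ∀ s ∈ Set.Ico (∑ j ∈ Finset.range i, d j u)
      (∑ j ∈ Finset.range (i + 1), d j u), z u s = ζ i) :
    ∃ C : ℝ, 0 < C ∧ ∀ u₁ u₂ : K,
      (∫ s in (0:ℝ)..1, ‖z u₁ s - z u₂ s‖ ^ 4) ≤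
        C * ∑ i ∈ Finset.range q, |d i u₁ - d i u₂| := by
  set c := (2 * ∑ i ∈ range q, ‖ζ i‖) ^ 4
  refine ⟨c * (q + 1) + 1, by positivity, fun u₁ u₂ => ?_⟩
  let D : K → ℕ → ℝ := fun u i => ∑ j ∈ range i, d j u
  have hunit (u : K) : Ico (0 : ℝ) 1 = Ico (D u 0) (D u q) := by simp [D, hd_sum]
  set T := ⋃ k ∈ range (q + 1), Ico (min (D u₁ k) (D u₂ k)) (max (D u₁ k) (D u₂ k))
  set S := ∑ i ∈ range q, |d i u₁ - d i u₂|
  calc ∫ s in (0 : ℝ)..1, ‖z u₁ s - z u₂ s‖ ^ 4 ≤ c * volume.real T :=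
        intervalIntegral_le_mul_measureReal zero_le_one (by positivity)
          (measurableSet_biUnion _ fun _ _ => measurableSet_Ico)
          (measure_biUnion_lt_top (finite_toSet _) fun _ _ => measure_Ico_lt_top).ne
          fun s hs => norm_step_sub_step_pow_le_indicator four_ne_zero (hz u₁) (hz u₂)
            (hunit u₁ ▸ Ioo_subset_Ico_self hs) (hunit u₂ ▸ Ioo_subset_Ico_self hs)
    _ ≤ c * ∑ k ∈ range (q + 1), |D u₁ k - D u₂ k| := by
        gcongr
        exact volume_real_biUnion_Ico_min_max_le _ _ _
    _ ≤ c * ∑ k ∈ range (q + 1), S := by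
        gcongr with k hk
        exact abs_sum_sub_sum_le_sum_abs_sub (range_subset_range.2 (mem_range_succ_iff.1 hk)) _ _
    _ = c * (q + 1) * S := by
        rw [sum_const, card_range, nsmul_eq_mul]
        push_cast
        ring
    _ ≤ (c * (q + 1) + 1) * S := by
        gcongr
        linarith

/-- Equicontinuity estimate for the 1-periodic relaxation step functions:
if `z uhat` equals `ζ i` on the interval `[D i uhat, D (i+1) uhat)` determined
by the partial sums `D i uhat = ∑_{j<i} d j uhat` of a continuous partition of
unity `d` on a compact metric space `K`, then the `L⁴` distance on `[0,1]`
between `z uhat₁` and `z uhat₂` is controlled by `∑ i |d i uhat₁ - d i uhat₂|`,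
with a constant depending only on `q` and `max_i ‖ζ i‖`. -/
theorem stmt_5 {K Y : Type*} [MetricSpace K] [CompactSpace K]
    [NormedAddCommGroup Y]
    (q : ℕ) (hq : 0 < q) (d : ℕ → K → ℝ)
    (hd_cont : ∀ i < q, Continuous (d i))
    (hd_nonneg : ∀ i < q, ∀ u : K, 0 ≤ d i u)
    (hd_sum : ∀ u : K, ∑ i ∈ Finset.range q, d i u = 1)
    (ζ : ℕ → Y) (z : K → ℝ → Y)
    (hz : ∀ u : K, ∀ i < q, ∀ s ∈ Set.Ico (∑ j ∈ Finset.range i, d j u)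
      (∑ j ∈ Finset.range (i + 1), d j u), z u s = ζ i) :
    ∃ C : ℝ, 0 < C ∧ ∀ u₁ u₂ : K,
      (∫ s in (0:ℝ)..1, ‖z u₁ s - z u₂ s‖ ^ 4) ≤
        C * ∑ i ∈ Finset.range q, |d i u₁ - d i u₂| :=
  stmt_5_general q d hd_sum ζ z hz
end

section
/- Let E be a Hilbert space, T > 0, and let X, Y ⊂ L²([0,T], E) be linear subspaces with X contained in the closure of Y. Let O ⊂ L²([0,T], E) be open, K a compact metric space, and Ψ : K → X ∩ O a continuous map, and let R : O → Z be a locally Lipschitz map into a normed space Z such that sup_{û∈K} ‖R(Ψ(û)) − G(û)‖ < ε for a given continuous G : K → Z and ε > 0. Then there is a finite-dimensional subspace Y₀ ⊂ Y and a continuous map Ψ' : K → Y₀ ∩ O with sup_{û∈K} ‖R(Ψ'(û)) − G(û)‖ < ε. -/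
open MeasureTheory

/-- Abstract form of Lemma 3.4: if uniform `ε`-controllability holds with
controls in a subspace `X ⊆ L²([0,T], E)` contained in the closure of a
subspace `Y`, then it holds with controls in some finite-dimensional subspace
`Y₀ ⊆ Y`. Here `O` is the open set of admissible controls, `R` the locally
Lipschitz resolving (end-point) operator and `G` the target map. -/
theorem stmt_8 {E Z : Type*} [NormedAddCommGroup E] [InnerProductSpace ℝ E]
    {K : Type*} [MetricSpace K] [CompactSpace K]
    [NormedAddCommGroup Z] (T : ℝ) (hT : 0 < T)
    (X Y : Submodule ℝ (Lp E 2 (volume.restrict (Set.Icc (0:ℝ) T))))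
    (hXY : (X : Set (Lp E 2 (volume.restrict (Set.Icc (0:ℝ) T)))) ⊆
      closure (Y : Set (Lp E 2 (volume.restrict (Set.Icc (0:ℝ) T)))))
    (O : Set (Lp E 2 (volume.restrict (Set.Icc (0:ℝ) T)))) (hO : IsOpen O)
    (Ψ : K → Lp E 2 (volume.restrict (Set.Icc (0:ℝ) T)))
    (hΨcont : Continuous Ψ) (hΨmem : ∀ u : K, Ψ u ∈ (X : Set _) ∩ O)
    (R : Lp E 2 (volume.restrict (Set.Icc (0:ℝ) T)) → Z)
    (hR : ∀ x ∈ O, ∃ C : NNReal, ∃ t ∈ nhds x, LipschitzOnWith C R (t ∩ O))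
    (G : K → Z) (hG : Continuous G) (ε : ℝ) (hε : 0 < ε)
    (happrox : ∀ u : K, ‖R (Ψ u) - G u‖ < ε) :
    ∃ Y₀ : Submodule ℝ (Lp E 2 (volume.restrict (Set.Icc (0:ℝ) T))),
      Y₀ ≤ Y ∧ FiniteDimensional ℝ Y₀ ∧
      ∃ Ψ' : K → Lp E 2 (volume.restrict (Set.Icc (0:ℝ) T)),
        Continuous Ψ' ∧ (∀ u : K, Ψ' u ∈ (Y₀ : Set _) ∩ O) ∧
        ∀ u : K, ‖R (Ψ' u) - G u‖ < ε := by
  classical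
  cases isEmpty_or_nonempty K with
  | inl h =>
    exact ⟨⊥, bot_le, inferInstance, Ψ, hΨcont, fun u => isEmptyElim u, fun u => isEmptyElim u⟩
  | inr hK =>
  -- Step 1: local uniform estimate
  have key : ∀ u : K, ∃ δ : ℝ, 0 < δ ∧ ∃ W : Set K, IsOpen W ∧ u ∈ W ∧
      ∀ u' ∈ W, ∀ v, dist v (Ψ u') < δ → v ∈ O ∧ ‖R v - G u'‖ < ε := by
    intro u
    obtain ⟨C, t, ht, hlip⟩ := hR (Ψ u) (hΨmem u).2
    obtain ⟨r, hr, hball⟩ := Metric.mem_nhds_iff.1 (Filter.inter_mem ht (hO.mem_nhds (hΨmem u).2))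
    set m : ℝ := ε - ‖R (Ψ u) - G u‖ with hm
    have hm0 : 0 < m := sub_pos.2 (happrox u)
    have hCpos : (0:ℝ) < (C:ℝ) + 1 := by positivity
    set δ : ℝ := min (r/3) (m/(3*((C:ℝ)+1))) with hδdef
    have hδ0 : 0 < δ := lt_min (by positivity) (by positivity)
    refine ⟨δ, hδ0, Ψ ⁻¹' Metric.ball (Ψ u) δ ∩ G ⁻¹' Metric.ball (G u) (m/3),
      (IsOpen.preimage hΨcont Metric.isOpen_ball).inter
        (IsOpen.preimage hG Metric.isOpen_ball), ?_, ?_⟩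
    · constructor
      · simp only [Set.mem_preimage, Metric.mem_ball, dist_self]; exact hδ0
      · simp only [Set.mem_preimage, Metric.mem_ball, dist_self]; positivity
    · rintro u' ⟨hu'Ψ, hu'G⟩ v hv
      have hΨu' : dist (Ψ u') (Ψ u) < δ := hu'Ψ
      have hvu : dist v (Ψ u) < r := by
        have h1 : dist v (Ψ u) ≤ dist v (Ψ u') + dist (Ψ u') (Ψ u) := dist_triangle _ _ _
        have h2 : δ ≤ r/3 := min_le_left _ _
        nlinarith [hv, hΨu']
      have hvmem : v ∈ t ∩ O := hball hvu
      have hΨumem : Ψ u ∈ t ∩ O := hball (by simpa using hr)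
      refine ⟨hvmem.2, ?_⟩
      have hRd : dist (R v) (R (Ψ u)) ≤ (C:ℝ) * dist v (Ψ u) := hlip.dist_le_mul v hvmem (Ψ u) hΨumem
      have hGd : dist (G u') (G u) < m/3 := hu'G
      have hd2 : dist v (Ψ u) < 2 * δ := by
        have h1 : dist v (Ψ u) ≤ dist v (Ψ u') + dist (Ψ u') (Ψ u) := dist_triangle _ _ _
        linarith [hv, hΨu']
      have hδm : δ ≤ m/(3*((C:ℝ)+1)) := min_le_right _ _
      have hCδ : (C:ℝ) * (2*δ) < 2*m/3 := by
        have hC0 : (0:ℝ) ≤ (C:ℝ) := C.coe_nonneg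
        have : (C:ℝ) * δ ≤ (C:ℝ) * (m/(3*((C:ℝ)+1))) := by
          exact mul_le_mul_of_nonneg_left hδm hC0
        have h2 : (C:ℝ) * (m/(3*((C:ℝ)+1))) < m/3 := by
          rw [← mul_div_assoc, div_lt_div_iff₀ (by positivity) (by norm_num : (0:ℝ) < 3)]
          nlinarith
        nlinarith
      calc ‖R v - G u'‖ = dist (R v) (G u') := (dist_eq_norm _ _).symm
        _ ≤ dist (R v) (R (Ψ u)) + dist (R (Ψ u)) (G u) + dist (G u) (G u') :=
            dist_triangle4 _ _ _ _
        _ < (C:ℝ) * (2*δ) + (ε - m) + m/3 := by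
            have h3 : dist (R (Ψ u)) (G u) = ε - m := by
              rw [dist_eq_norm]; simp [hm]
            have h4 : dist (R v) (R (Ψ u)) ≤ (C:ℝ) * (2*δ) := by
              refine hRd.trans ?_
              exact mul_le_mul_of_nonneg_left hd2.le C.coe_nonneg
            have h5 : dist (G u) (G u') < m/3 := by rwa [dist_comm]
            -- need strictness: h4 ≤, h5 <
            linarith
        _ < ε := by linarith
  choose δ hδpos W hWopen hWmem hW using key
  obtain ⟨s, hs⟩ := isCompact_univ.elim_finite_subcover W hWopen
    (fun u _ => Set.mem_iUnion.2 ⟨u, hWmem u⟩)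
  have hsne : s.Nonempty := by
    obtain ⟨u₀⟩ := hK
    have := hs (Set.mem_univ u₀)
    simp only [Set.mem_iUnion] at this
    obtain ⟨w, hw, _⟩ := this
    exact ⟨w, hw⟩
  set δ₀ : ℝ := s.inf' hsne δ with hδ₀def
  have hδ₀pos : 0 < δ₀ := by
    rw [hδ₀def, Finset.lt_inf'_iff]
    exact fun b _ => hδpos b
  -- Step 2: uniform continuity of Ψ
  obtain ⟨ρ, hρpos, hρ⟩ := Metric.uniformContinuous_iff.1
    (CompactSpace.uniformContinuous_of_continuous hΨcont) (δ₀/3) (by positivity)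
  -- Step 3: finite cover by balls
  obtain ⟨s₂, hs₂⟩ := isCompact_univ.elim_finite_subcover (fun v : K => Metric.ball v ρ)
    (fun v => Metric.isOpen_ball) (fun u _ => Set.mem_iUnion.2 ⟨u, Metric.mem_ball_self hρpos⟩)
  -- Step 4: approximate points in Y
  have hy : ∀ v : K, ∃ y, y ∈ Y ∧ dist (Ψ v) y < δ₀/3 := fun v =>
    Metric.mem_closure_iff.1 (hXY (hΨmem v).1) _ (by positivity)
  choose y hyY hyd using hy
  -- Step 5: partition of unity
  obtain ⟨f, hf⟩ := PartitionOfUnity.exists_isSubordinate isClosed_univ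
    (fun i : s₂ => Metric.ball (i:K) ρ) (fun i => Metric.isOpen_ball)
    (by intro u _; have := hs₂ (Set.mem_univ u); simpa using this)
  set Ψ' : K → Lp E 2 (volume.restrict (Set.Icc (0:ℝ) T)) :=
    fun u => ∑ i : s₂, f i u • y (i:K) with hΨ'def
  have hΨ'cont : Continuous Ψ' :=
    continuous_finset_sum _ (fun i _ => ((f i).continuous).smul continuous_const)
  set Y₀ : Submodule ℝ (Lp E 2 (volume.restrict (Set.Icc (0:ℝ) T))) :=
    Submodule.span ℝ (Set.range fun i : s₂ => y (i:K)) with hY₀def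
  have hY₀Y : Y₀ ≤ Y := by
    rw [hY₀def, Submodule.span_le]
    rintro _ ⟨i, rfl⟩
    exact hyY _
  have hY₀fd : FiniteDimensional ℝ Y₀ :=
    FiniteDimensional.span_of_finite ℝ (Set.finite_range _)
  have hΨ'mem : ∀ u, Ψ' u ∈ Y₀ := by
    intro u
    exact Submodule.sum_mem _ (fun i _ =>
      Submodule.smul_mem _ _ (Submodule.subset_span ⟨i, rfl⟩))
  -- Step 6: uniform approximation
  have hsum1 : ∀ u : K, ∑ i : s₂, f i u = 1 := by
    intro u
    have := f.sum_eq_one (Set.mem_univ u)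
    rwa [finsum_eq_sum_of_fintype] at this
  have happ : ∀ u : K, ‖Ψ' u - Ψ u‖ ≤ 2*δ₀/3 := by
    intro u
    have hrw : Ψ' u - Ψ u = ∑ i : s₂, f i u • (y (i:K) - Ψ u) := by
      rw [hΨ'def]
      simp only [smul_sub, Finset.sum_sub_distrib, ← Finset.sum_smul, hsum1, one_smul]
    rw [hrw]
    refine (norm_sum_le _ _).trans ?_
    have hterm : ∀ i : s₂, ‖f i u • (y (i:K) - Ψ u)‖ ≤ f i u * (2*δ₀/3) := by
      intro i
      rw [norm_smul, Real.norm_eq_abs, abs_of_nonneg (f.nonneg i u)]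
      by_cases h : f i u = 0
      · simp [h]
      · refine mul_le_mul_of_nonneg_left ?_ (f.nonneg i u)
        have hu : u ∈ Metric.ball (i:K) ρ := hf i (subset_tsupport _ h)
        have h1 : dist (Ψ u) (Ψ (i:K)) < δ₀/3 := hρ (by simpa [Metric.mem_ball] using hu)
        have h2 : dist (Ψ (i:K)) (y (i:K)) < δ₀/3 := hyd (i:K)
        have : ‖y (i:K) - Ψ u‖ = dist (Ψ u) (y (i:K)) := by
          rw [dist_eq_norm, norm_sub_rev]
        rw [this]
        calc dist (Ψ u) (y (i:K)) ≤ dist (Ψ u) (Ψ (i:K)) + dist (Ψ (i:K)) (y (i:K)) :=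
              dist_triangle _ _ _
          _ ≤ 2*δ₀/3 := by linarith
    calc (∑ i : s₂, ‖f i u • (y (i:K) - Ψ u)‖) ≤ ∑ i : s₂, f i u * (2*δ₀/3) :=
          Finset.sum_le_sum (fun i _ => hterm i)
      _ = (∑ i : s₂, f i u) * (2*δ₀/3) := by rw [Finset.sum_mul]
      _ = 2*δ₀/3 := by rw [hsum1]; ring
  -- Conclusion
  refine ⟨Y₀, hY₀Y, hY₀fd, Ψ', hΨ'cont, ?_, ?_⟩
  all_goals intro u
  · obtain ⟨w, hw, hu⟩ : ∃ w ∈ s, u ∈ W w := by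
      have := hs (Set.mem_univ u)
      simpa using this
    have hd : dist (Ψ' u) (Ψ u) < δ w := by
      rw [dist_eq_norm]
      calc ‖Ψ' u - Ψ u‖ ≤ 2*δ₀/3 := happ u
        _ < δ₀ := by linarith
        _ ≤ δ w := Finset.inf'_le _ hw
    exact ⟨hΨ'mem u, ((hW w u hu (Ψ' u) hd).1)⟩
  · obtain ⟨w, hw, hu⟩ : ∃ w ∈ s, u ∈ W w := by
      have := hs (Set.mem_univ u)
      simpa using this
    have hd : dist (Ψ' u) (Ψ u) < δ w := by
      rw [dist_eq_norm]
      calc ‖Ψ' u - Ψ u‖ ≤ 2*δ₀/3 := happ u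
        _ < δ₀ := by linarith
        _ ≤ δ w := Finset.inf'_le _ hw
    exact (hW w u hu (Ψ' u) hd).2
end
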